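/- Pointwise bound for the projection π_n (key inequality in Step 2 of the proof of Lemma 3.1): there exists a constant C_q > 0 depending only on q such that for every v ∈ L²(J_n; V) and every s ∈ J_n, ‖(π_n v)(s)‖_U² ≤ (C_q / τ_n) ‖v‖_{L²(J_n;U)} ‖π_n v‖_{L²(J_n;U)}, both for U = V and for U = H. -/

import Mathlib

/-!
Since `p(tₙ) = 0`, write `p(x) = ∑_{j<q} (x - tₙ)^(j+1) c_j` and put `τ = tₙ₊₁ - tₙ`,
`β_j = τ^(j+1) c_j`. The orthogonality conditions say that `v` and `p` have the same moments
`∫ (x - tₙ)^l`, `l < q`, and for `p` these moments are `τ^(l+1) (A β)_l`, where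
`A_{lj} = 1/(l+j+2) = ∫₀¹ t^l t^(j+1) dt` is positive definite, hence invertible. So
`β = A⁻¹ m` with `m_l` the rescaled moments, and Cauchy–Schwarz bounds each `‖m_l‖` by
`τ^(-1/2) ‖f‖_{L²}` for `f = v` as well as for `f = p`. Therefore
`‖p(s)‖ ≤ ∑_j ‖β_j‖ ≤ K τ^(-1/2) ‖f‖_{L²}` with `K = ∑_{j,l} |(A⁻¹)_{jl}|`, and multiplying the
two bounds gives the claim with `C = K²`. The bound in `H` is the same argument for `ι ∘ v`
and `ι ∘ p`.
-/

open MeasureTheory Set Polynomial Matrix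

noncomputable def momentMatrix (q : ℕ) : Matrix (Fin q) (Fin q) ℝ :=
  Matrix.of fun l j => ((l : ℝ) + j + 2)⁻¹

theorem dotProduct_momentMatrix_mulVec {q : ℕ} (x : Fin q → ℝ) :
    x ⬝ᵥ (momentMatrix q *ᵥ x) = ∫ t in (0 : ℝ)..1, t * (∑ j, x j * t ^ (j : ℕ)) ^ 2 := by
  have hexpand : ∀ t : ℝ, t * (∑ j, x j * t ^ (j : ℕ)) ^ 2
      = ∑ l, ∑ j, (x l * x j) * t ^ ((l : ℕ) + j + 1) := by
    intro t
    rw [sq, Finset.sum_mul_sum, Finset.mul_sum]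
    refine Finset.sum_congr rfl fun l _ => ?_
    rw [Finset.mul_sum]
    exact Finset.sum_congr rfl fun j _ => by ring
  simp only [hexpand]
  rw [intervalIntegral.integral_finsetSum fun l _ =>
    Continuous.intervalIntegrable (by fun_prop) _ _]
  refine Finset.sum_congr rfl fun l _ => ?_
  rw [intervalIntegral.integral_finsetSum fun j _ =>
    Continuous.intervalIntegrable (by fun_prop) _ _, mulVec, dotProduct, Finset.mul_sum]
  refine Finset.sum_congr rfl fun j _ => ?_
  rw [intervalIntegral.integral_const_mul, integral_pow, momentMatrix, of_apply]
  push_cast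
  field_simp
  ring

theorem Polynomial.eval_ofFn {R : Type*} [Semiring R] [DecidableEq R] {n : ℕ} (v : Fin n → R)
    (x : R) : (ofFn n v).eval x = ∑ i, v i * x ^ (i : ℕ) := by
  simp [ofFn_eq_sum_monomial, eval_finsetSum]

theorem posDef_momentMatrix (q : ℕ) : (momentMatrix q).PosDef := by
  refine posDef_iff_dotProduct_mulVec.mpr ⟨?_, fun x hx => ?_⟩
  · ext l j
    simp [momentMatrix, add_comm]
  have hP : ofFn q x ≠ 0 := (map_ne_zero_iff _ (injective_ofFn q)).mpr hx
  obtain ⟨t, ht, hroot⟩ :=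
    (Ioo_infinite (zero_lt_one' ℝ)).exists_notMem_finset (ofFn q x).roots.toFinset
  have hPt : ∑ j, x j * t ^ (j : ℕ) ≠ 0 := by
    simpa [← eval_ofFn, hP] using hroot
  rw [star_trivial, dotProduct_momentMatrix_mulVec]
  exact intervalIntegral.integral_pos zero_lt_one (by fun_prop)
    (fun u hu => mul_nonneg hu.1.le (sq_nonneg _))
    ⟨t, Ioo_subset_Icc_self ht, mul_pos ht.1 (sq_pos_of_ne_zero hPt)⟩

theorem Matrix.eq_sum_inv_smul_of_eq_sum_smul {n R M : Type*} [Fintype n] [DecidableEq n]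
    [CommRing R] [AddCommGroup M] [Module R M] {A : Matrix n n R} (hA : IsUnit A.det)
    {b m : n → M} (h : ∀ l, m l = ∑ j, A l j • b j) (k : n) :
    b k = ∑ l, A⁻¹ k l • m l := by
  simp only [h, Finset.smul_sum, smul_smul]
  rw [Finset.sum_comm]
  simp only [← Finset.sum_smul, ← mul_apply, nonsing_inv_mul A hA, one_apply, ite_smul,
    one_smul, zero_smul, Finset.sum_ite_eq, Finset.mem_univ, if_true]

noncomputable def momentConst (q : ℕ) : ℝ :=
  ∑ j, ∑ l, |(momentMatrix q)⁻¹ j l|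

theorem exists_sum_sub_pow_smul {E : Type*} [AddCommGroup E] [Module ℝ E] {n : ℕ}
    (c : Fin (n + 1) → E) (a : ℝ) :
    ∃ d : Fin (n + 1) → E, ∀ x : ℝ,
      ∑ j : Fin (n + 1), x ^ (j : ℕ) • c j = ∑ k : Fin (n + 1), (x - a) ^ (k : ℕ) • d k := by
  refine ⟨fun k => ∑ j : Fin (n + 1), (taylor a (X ^ (j : ℕ) : ℝ[X])).coeff k • c j,
    fun x => ?_⟩
  have hmonomial : ∀ j : Fin (n + 1), x ^ (j : ℕ)
      = ∑ k : Fin (n + 1), (taylor a (X ^ (j : ℕ) : ℝ[X])).coeff k * (x - a) ^ (k : ℕ) := by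
    intro j
    rw [Fin.sum_univ_eq_sum_range (fun k => (taylor a (X ^ (j : ℕ) : ℝ[X])).coeff k * (x - a) ^ k),
      ← eval_eq_sum_range' (by simpa using j.isLt), taylor_eval, sub_add_cancel, eval_X_pow]
  simp only [hmonomial, Finset.sum_smul, Finset.smul_sum, smul_smul]
  rw [Finset.sum_comm]
  exact Finset.sum_congr rfl fun k _ => Finset.sum_congr rfl fun j _ => by rw [mul_comm]

theorem exists_sum_sub_pow_succ_smul_of_eq_zero {E : Type*} [AddCommGroup E] [Module ℝ E]
    {n : ℕ} {p : ℝ → E} {c : Fin (n + 1) → E}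
    (hp : ∀ x, p x = ∑ j : Fin (n + 1), x ^ (j : ℕ) • c j) {a : ℝ} (ha : p a = 0) :
    ∃ d : Fin n → E, ∀ x, p x = ∑ j : Fin n, (x - a) ^ ((j : ℕ) + 1) • d j := by
  obtain ⟨d, hd⟩ := exists_sum_sub_pow_smul c a
  have hd0 : d 0 = 0 := by
    simpa [hp, hd, Fin.sum_univ_succ] using ha
  refine ⟨fun j => d j.succ, fun x => ?_⟩
  rw [hp, hd, Fin.sum_univ_succ, hd0]
  simp

section

variable {E : Type*} [NormedAddCommGroup E] {a b : ℝ}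

theorem memLp_restrict_Ioc_of_continuous {f : ℝ → E} (hf : Continuous f) (r : ENNReal) :
    MemLp f r (volume.restrict (Ioc a b)) := by
  obtain ⟨C, hC⟩ := (isCompact_Icc (a := a) (b := b)).exists_bound_of_continuousOn
    hf.continuousOn
  refine MemLp.of_bound hf.aestronglyMeasurable C ?_
  exact (ae_restrict_iff' measurableSet_Ioc).2
    (ae_of_all _ fun x hx => hC x (Ioc_subset_Icc_self hx))

variable [NormedSpace ℝ E]

theorem integrableOn_Ioc_smul_of_memLp {g : ℝ → ℝ} (hg : Continuous g) {f : ℝ → E}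
    (hf : MemLp f 2 (volume.restrict (Ioc a b))) :
    IntegrableOn (fun x => g x • f x) (Ioc a b) :=
  IntegrableOn.continuousOn_smul_of_subset hg.continuousOn (hf.integrable one_le_two)
    isCompact_Icc measurableSet_Ioc Ioc_subset_Icc_self

theorem norm_integral_smul_le_sqrt_mul_sqrt {α : Type*} [MeasurableSpace α] {μ : Measure α}
    {g : α → ℝ} {f : α → E} (hg : MemLp g 2 μ) (hf : MemLp f 2 μ) :
    ‖∫ x, g x • f x ∂μ‖ ≤ √(∫ x, g x ^ 2 ∂μ) * √(∫ x, ‖f x‖ ^ 2 ∂μ) := by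
  have h2 : ENNReal.ofReal 2 = 2 := by norm_num
  have hholder := integral_mul_norm_le_Lp_mul_Lq (μ := μ) Real.HolderConjugate.two_two
    (f := g) (g := fun x => ‖f x‖) (h2 ▸ hg) (h2 ▸ hf.norm)
  simp only [Real.norm_eq_abs, abs_norm, ← Real.sqrt_eq_rpow, Real.rpow_two, sq_abs] at hholder
  calc ‖∫ x, g x • f x ∂μ‖ ≤ ∫ x, |g x| * ‖f x‖ ∂μ := by
        simpa [norm_smul] using norm_integral_le_integral_norm (fun x => g x • f x)
    _ ≤ _ := hholder

theorem integral_Ioc_sub_pow (hab : a ≤ b) (n : ℕ) :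
    ∫ x in Ioc a b, (x - a) ^ n = (b - a) ^ (n + 1) / (n + 1) := by
  rw [← intervalIntegral.integral_of_le hab,
    intervalIntegral.integral_comp_sub_right (fun t => t ^ n), sub_self, integral_pow]
  simp

theorem norm_integral_Ioc_sub_pow_smul_le (hab : a ≤ b) (l : ℕ) {f : ℝ → E}
    (hf : MemLp f 2 (volume.restrict (Ioc a b))) :
    ‖∫ x in Ioc a b, (x - a) ^ l • f x‖
      ≤ (b - a) ^ l * √(b - a) * √(∫ x in Ioc a b, ‖f x‖ ^ 2) := by
  have hτ : 0 ≤ b - a := sub_nonneg.2 hab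
  refine (norm_integral_smul_le_sqrt_mul_sqrt
    (memLp_restrict_Ioc_of_continuous (by fun_prop) 2) hf).trans ?_
  gcongr
  calc √(∫ x in Ioc a b, ((x - a) ^ l) ^ 2)
      = √((b - a) ^ (2 * l + 1) / (2 * l + 1)) := by
        simp_rw [← pow_mul, mul_comm l 2, integral_Ioc_sub_pow hab]
        push_cast
        rfl
    _ ≤ √((b - a) ^ (2 * l + 1)) :=
        Real.sqrt_le_sqrt (div_le_self (by positivity) (by linarith))
    _ = (b - a) ^ l * √(b - a) := by
        rw [pow_succ, pow_mul', Real.sqrt_mul (by positivity), Real.sqrt_sq (by positivity)]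

theorem norm_sum_sub_pow_succ_smul_le {q : ℕ} (c : Fin q → E) {s : ℝ} (hs : s ∈ Ioc a b) :
    ‖∑ j : Fin q, (s - a) ^ ((j : ℕ) + 1) • c j‖
      ≤ ∑ j : Fin q, ‖(b - a) ^ ((j : ℕ) + 1) • c j‖ := by
  refine (norm_sum_le _ _).trans (Finset.sum_le_sum fun j _ => ?_)
  simp only [norm_smul, norm_pow, Real.norm_eq_abs]
  gcongr
  exacts [(sub_pos.2 hs.1).le, hs.2]

variable [CompleteSpace E]

theorem integral_Ioc_sub_pow_smul_sum (hab : a ≤ b) {q : ℕ} (c : Fin q → E) (l : Fin q) :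
    ∫ x in Ioc a b, (x - a) ^ (l : ℕ) • ∑ j : Fin q, (x - a) ^ ((j : ℕ) + 1) • c j
      = (b - a) ^ ((l : ℕ) + 1) • ∑ j, momentMatrix q l j • ((b - a) ^ ((j : ℕ) + 1) • c j) := by
  simp only [Finset.smul_sum, smul_smul, ← pow_add]
  rw [integral_finsetSum _ fun j _ => (by fun_prop : Continuous _).integrableOn_Ioc]
  refine Finset.sum_congr rfl fun j _ => ?_
  rw [integral_smul_const, integral_Ioc_sub_pow hab, momentMatrix, of_apply]
  congr 1
  push_cast
  field_simp
  ring

theorem norm_le_of_moment_eq {q : ℕ} {c : Fin q → E} {p f : ℝ → E}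
    (hp : ∀ x, p x = ∑ j : Fin q, (x - a) ^ ((j : ℕ) + 1) • c j)
    (hf : MemLp f 2 (volume.restrict (Ioc a b)))
    (hmom : ∀ l < q, ∫ x in Ioc a b, (x - a) ^ l • p x = ∫ x in Ioc a b, (x - a) ^ l • f x)
    {s : ℝ} (hs : s ∈ Ioc a b) :
    ‖p s‖ ≤ momentConst q / √(b - a) * √(∫ x in Ioc a b, ‖f x‖ ^ 2) := by
  have hab : a < b := hs.1.trans_le hs.2
  set τ := b - a
  have hτ : 0 < τ := sub_pos.2 hab
  set N := √(∫ x in Ioc a b, ‖f x‖ ^ 2)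
  set β : Fin q → E := fun j => τ ^ ((j : ℕ) + 1) • c j
  set m : Fin q → E := fun l => (τ ^ ((l : ℕ) + 1))⁻¹ • ∫ x in Ioc a b, (x - a) ^ (l : ℕ) • f x
  have hm : ∀ l, m l = ∑ j, momentMatrix q l j • β j := fun l => by
    have hmom_p : ∫ x in Ioc a b, (x - a) ^ (l : ℕ) • p x
        = τ ^ ((l : ℕ) + 1) • ∑ j, momentMatrix q l j • β j := by
      simp only [hp]
      exact integral_Ioc_sub_pow_smul_sum hab.le c l
    dsimp only [m]
    rw [← hmom l l.isLt, hmom_p, inv_smul_smul₀ (pow_ne_zero _ hτ.ne')]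
  have hm_le : ∀ l, ‖m l‖ ≤ N / √τ := fun l => by
    calc ‖m l‖ ≤ (τ ^ ((l : ℕ) + 1))⁻¹ * (τ ^ (l : ℕ) * √τ * N) := by
          rw [norm_smul, norm_inv, norm_pow, Real.norm_of_nonneg hτ.le]
          gcongr
          exact norm_integral_Ioc_sub_pow_smul_le hab.le l hf
      _ = N / √τ := by
          have hsq : √τ ^ 2 = τ := Real.sq_sqrt hτ.le
          field_simp
          rw [hsq]
          ring
  have hβ : ∀ j, ‖β j‖ ≤ (∑ l, |(momentMatrix q)⁻¹ j l|) * (N / √τ) := fun j => by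
    rw [eq_sum_inv_smul_of_eq_sum_smul (posDef_momentMatrix q).det_pos.ne'.isUnit hm j,
      Finset.sum_mul]
    refine (norm_sum_le _ _).trans (Finset.sum_le_sum fun l _ => ?_)
    rw [norm_smul, Real.norm_eq_abs]
    exact mul_le_mul_of_nonneg_left (hm_le l) (abs_nonneg _)
  calc ‖p s‖ ≤ ∑ j, ‖β j‖ := hp s ▸ norm_sum_sub_pow_succ_smul_le c hs
    _ ≤ ∑ j, (∑ l, |(momentMatrix q)⁻¹ j l|) * (N / √τ) := Finset.sum_le_sum fun j _ => hβ j
    _ = momentConst q / √τ * N := by rw [← Finset.sum_mul, momentConst]; ring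

theorem sq_norm_le_of_integral_sub_pow_smul_sub_eq_zero {q : ℕ} {c : Fin q → E} {p v : ℝ → E}
    (hp : ∀ x, p x = ∑ j : Fin q, (x - a) ^ ((j : ℕ) + 1) • c j)
    (hv : MemLp v 2 (volume.restrict (Ioc a b)))
    (horth : ∀ l < q, ∫ x in Ioc a b, (x - a) ^ l • (v x - p x) = 0)
    {C : ℝ} (hC : momentConst q ^ 2 ≤ C) {s : ℝ} (hs : s ∈ Ioc a b) :
    ‖p s‖ ^ 2 ≤ C / (b - a) * (√(∫ x in Ioc a b, ‖v x‖ ^ 2) * √(∫ x in Ioc a b, ‖p x‖ ^ 2)) := by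
  have hτ : 0 < b - a := sub_pos.2 (hs.1.trans_le hs.2)
  have hpm : MemLp p 2 (volume.restrict (Ioc a b)) :=
    memLp_restrict_Ioc_of_continuous (funext hp ▸ by fun_prop) 2
  have hmom : ∀ l < q, ∫ x in Ioc a b, (x - a) ^ l • p x = ∫ x in Ioc a b, (x - a) ^ l • v x :=
    fun l hl => by
      have h := horth l hl
      simp_rw [smul_sub] at h
      rw [integral_sub (integrableOn_Ioc_smul_of_memLp (by fun_prop) hv)
        (integrableOn_Ioc_smul_of_memLp (by fun_prop) hpm)] at h
      exact (sub_eq_zero.1 h).symm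
  have hv_bound := norm_le_of_moment_eq hp hv hmom hs
  have hp_bound := norm_le_of_moment_eq hp hpm (fun _ _ => rfl) hs
  calc ‖p s‖ ^ 2 = ‖p s‖ * ‖p s‖ := sq _
    _ ≤ (momentConst q / √(b - a) * √(∫ x in Ioc a b, ‖v x‖ ^ 2))
        * (momentConst q / √(b - a) * √(∫ x in Ioc a b, ‖p x‖ ^ 2)) :=
        mul_le_mul hv_bound hp_bound (norm_nonneg _) (hv_bound.trans' (norm_nonneg _))
    _ = momentConst q ^ 2 / (b - a)
        * (√(∫ x in Ioc a b, ‖v x‖ ^ 2) * √(∫ x in Ioc a b, ‖p x‖ ^ 2)) := by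
        field_simp
        rw [Real.sq_sqrt hτ.le]
    _ ≤ C / (b - a) * (√(∫ x in Ioc a b, ‖v x‖ ^ 2) * √(∫ x in Ioc a b, ‖p x‖ ^ 2)) := by
        gcongr

theorem ContinuousLinearMap.integral_Ioc_sub_pow_smul_comp {F : Type*} [NormedAddCommGroup F]
    [NormedSpace ℝ F] [CompleteSpace F] (L : E →L[ℝ] F) {f : ℝ → E}
    (hf : MemLp f 2 (volume.restrict (Ioc a b))) (l : ℕ) :
    ∫ x in Ioc a b, (x - a) ^ l • L (f x) = L (∫ x in Ioc a b, (x - a) ^ l • f x) := by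
  simp_rw [← L.map_smul]
  exact L.integral_comp_comm (integrableOn_Ioc_smul_of_memLp (by fun_prop) hf)

end

theorem projection_pointwise_bound_general (q : ℕ) :
    ∃ C : ℝ, 0 < C ∧
      ∀ (V : Type u) [NormedAddCommGroup V] [InnerProductSpace ℝ V] [CompleteSpace V]
        (H : Type w) [NormedAddCommGroup H] [InnerProductSpace ℝ H] [CompleteSpace H]
        (ι : V →L[ℝ] H), Function.Injective ι →
      ∀ tn tn1 : ℝ, tn < tn1 →
      ∀ v : ℝ → V, MemLp v 2 (volume.restrict (Set.Ioc tn tn1)) →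
      ∀ p : ℝ → V,
        (∃ c : Fin (q + 1) → V, ∀ x : ℝ, p x = ∑ j : Fin (q + 1), x ^ (j : ℕ) • c j) →
        p tn = 0 →
        (∀ l < q, (∫ x in Set.Ioc tn tn1, (x - tn) ^ l • (v x - p x)) = 0) →
      ∀ s ∈ Set.Ioc tn tn1,
        ‖p s‖ ^ 2 ≤ C / (tn1 - tn) *
            (Real.sqrt (∫ x in Set.Ioc tn tn1, ‖v x‖ ^ 2) *
              Real.sqrt (∫ x in Set.Ioc tn tn1, ‖p x‖ ^ 2)) ∧
        ‖ι (p s)‖ ^ 2 ≤ C / (tn1 - tn) *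
            (Real.sqrt (∫ x in Set.Ioc tn tn1, ‖ι (v x)‖ ^ 2) *
              Real.sqrt (∫ x in Set.Ioc tn tn1, ‖ι (p x)‖ ^ 2)) := by
  -- `+ 1` keeps `C` positive when `q = 0`, where `momentConst q = 0`.
  refine ⟨momentConst q ^ 2 + 1, by positivity, ?_⟩
  intro V _ _ _ H _ _ _ ι _ tn tn1 _ v hv p ⟨c, hc⟩ hp0 horth s hs
  obtain ⟨d, hd⟩ := exists_sum_sub_pow_succ_smul_of_eq_zero hc hp0
  have hC : momentConst q ^ 2 ≤ momentConst q ^ 2 + 1 := le_add_of_nonneg_right zero_le_one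
  have hpm : MemLp p 2 (volume.restrict (Ioc tn tn1)) :=
    memLp_restrict_Ioc_of_continuous (funext hc ▸ by fun_prop) 2
  have hιp : ∀ x, ι (p x) = ∑ j : Fin q, (x - tn) ^ ((j : ℕ) + 1) • ι (d j) := fun x => by
    simp [hd]
  have hιorth : ∀ l < q, ∫ x in Ioc tn tn1, (x - tn) ^ l • (ι (v x) - ι (p x)) = 0 :=
    fun l hl => by
      simp_rw [← ι.map_sub,
        ι.integral_Ioc_sub_pow_smul_comp (f := fun x => v x - p x) (hv.sub hpm), horth l hl,
        map_zero]
  exact ⟨sq_norm_le_of_integral_sub_pow_smul_sub_eq_zero hd hv horth hC hs,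
    sq_norm_le_of_integral_sub_pow_smul_sub_eq_zero hιp (ι.comp_memLp' hv) hιorth hC hs⟩

/-- **Pointwise bound for the projection `π_n`** (key inequality in Step 2 of the proof of
Lemma 3.1): there is `C_q > 0` depending only on `q` such that for every `v ∈ L²(J_n; V)`
and every `s ∈ J_n`, `‖(π_n v)(s)‖_U² ≤ (C_q/τ_n) ‖v‖_{L²(J_n;U)} ‖π_n v‖_{L²(J_n;U)}`,
both for `U = V` and `U = H`. The projection `π_n v` is represented by any polynomial `p`
satisfying its characterizing conditions. -/
theorem projection_pointwise_bound (q : ℕ) (hq : 1 ≤ q) :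
    ∃ C : ℝ, 0 < C ∧
      ∀ (V : Type u) [NormedAddCommGroup V] [InnerProductSpace ℝ V] [CompleteSpace V]
        (H : Type w) [NormedAddCommGroup H] [InnerProductSpace ℝ H] [CompleteSpace H]
        (ι : V →L[ℝ] H), Function.Injective ι →
      ∀ tn tn1 : ℝ, tn < tn1 →
      ∀ v : ℝ → V, MemLp v 2 (volume.restrict (Set.Ioc tn tn1)) →
      ∀ p : ℝ → V,
        (∃ c : Fin (q + 1) → V, ∀ x : ℝ, p x = ∑ j : Fin (q + 1), x ^ (j : ℕ) • c j) →
        p tn = 0 →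
        (∀ l < q, (∫ x in Set.Ioc tn tn1, (x - tn) ^ l • (v x - p x)) = 0) →
      ∀ s ∈ Set.Ioc tn tn1,
        ‖p s‖ ^ 2 ≤ C / (tn1 - tn) *
            (Real.sqrt (∫ x in Set.Ioc tn tn1, ‖v x‖ ^ 2) *
              Real.sqrt (∫ x in Set.Ioc tn tn1, ‖p x‖ ^ 2)) ∧
        ‖ι (p s)‖ ^ 2 ≤ C / (tn1 - tn) *
            (Real.sqrt (∫ x in Set.Ioc tn tn1, ‖ι (v x)‖ ^ 2) *
              Real.sqrt (∫ x in Set.Ioc tn tn1, ‖ι (p x)‖ ^ 2)) :=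
  projection_pointwise_bound_general q
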